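/- Let (X,r,μ) be a complete separable metric space equipped with a Borel probability measure μ whose support is X. Then (X,r) is compact if and only if for every ε > 0 there exists δ > 0 such that μ{x ∈ X : μ(B_ε(x)) ≤ δ} = 0. -/

import Mathlib

open Metric MeasureTheory ENNReal
open Function

/-!
If `X` is compact, finitely many balls of radius `ε/2` cover it, each of positive measure, and
every `B_ε(x)` contains one of them: so `μ(B_ε(x))` is bounded below uniformly and the set of
thin points is empty. If `X` is not compact, it is not totally bounded, so it contains an infinite
`ε`-separated sequence `xₙ`. The balls `B(xₙ, ε/2)` are disjoint, so their measures tend to `0`;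
once `μ(B(xₙ, ε/2)) ≤ δ`, every point of `B(xₙ, ε/4)` is `(ε/4, δ)`-thin, and this ball has
positive measure.
-/

lemma exists_measure_le_of_pairwise_disjoint {α : Type*} [MeasurableSpace α] (μ : Measure α)
    [IsFiniteMeasure μ] {s : ℕ → Set α} (hs : ∀ n, MeasurableSet (s n))
    (hd : Pairwise (Disjoint on s)) {δ : ℝ≥0∞} (hδ : 0 < δ) : ∃ n, μ (s n) ≤ δ := by
  have hsum : ∑' n, μ (s n) ≠ ∞ := by
    rw [← measure_iUnion hd hs]
    exact measure_ne_top μ _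
  exact ((ENNReal.tendsto_atTop_zero_of_tsum_ne_top hsum).eventually (gt_mem_nhds hδ)).exists.imp
    fun _ ↦ le_of_lt

section

variable {X : Type*} [PseudoMetricSpace X]

lemma exists_seq_pairwise_le_dist_of_not_totallyBounded {s : Set X} (hs : ¬TotallyBounded s) :
    ∃ ε > 0, ∃ f : ℕ → X, (∀ n, f n ∈ s) ∧ Pairwise ((ε ≤ dist · ·) on f) := by
  rw [totallyBounded_iff] at hs
  push Not at hs
  obtain ⟨ε, hε, hcover⟩ := hs
  have : Std.Symm (ε ≤ dist · · : X → X → Prop) := ⟨fun x y h ↦ by rwa [dist_comm]⟩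
  refine ⟨ε, hε, exists_seq_of_forall_finset_exists' (· ∈ s) _ fun t _ ↦ ?_⟩
  obtain ⟨y, hys, hy⟩ := Set.not_subset.1 (hcover t t.finite_toSet)
  refine ⟨y, hys, fun x hx ↦ not_lt.1 fun hxy ↦ hy (Set.mem_biUnion hx ?_)⟩
  rwa [mem_ball, dist_comm]

variable [MeasurableSpace X] {μ : Measure X}

lemma isOpenPosMeasure_of_forall_measure_ball_pos (h : ∀ x : X, ∀ r > (0 : ℝ), 0 < μ (ball x r)) :
    μ.IsOpenPosMeasure where
  open_pos U hU := fun ⟨x, hx⟩ ↦ by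
    obtain ⟨r, hr, hball⟩ := Metric.isOpen_iff.1 hU x hx
    exact ((h x r hr).trans_le (measure_mono hball)).ne'

lemma ball_subset_setOf_measure_closedBall_le {x : X} {r : ℝ} {δ : ℝ≥0∞}
    (h : μ (ball x (2 * r)) ≤ δ) : ball x r ⊆ {y | μ (closedBall y r) ≤ δ} := fun y hy ↦
  (measure_mono (closedBall_subset_ball' (by linarith [mem_ball.1 hy]))).trans h

variable (μ)

lemma exists_pos_forall_lt_measure_closedBall [CompactSpace X] [μ.IsOpenPosMeasure] {ε : ℝ}
    (hε : 0 < ε) : ∃ δ > 0, ∀ x : X, δ < μ (closedBall x ε) := by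
  obtain ⟨t, ht⟩ := isCompact_univ.elim_finite_subcover (fun y : X ↦ ball y (ε / 2))
    (fun _ ↦ isOpen_ball) (fun y _ ↦ Set.mem_iUnion.2 ⟨y, mem_ball_self (half_pos hε)⟩)
  set δ₀ := t.inf fun y ↦ μ (ball y (ε / 2))
  have hδ₀ : 0 < δ₀ :=
    (Finset.lt_inf_iff zero_lt_top).2 fun y _ ↦ measure_ball_pos μ y (half_pos hε)
  have hle (x : X) : δ₀ ≤ μ (closedBall x ε) := by
    obtain ⟨y, hy, hxy⟩ := Set.mem_iUnion₂.1 (ht (Set.mem_univ x))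
    refine (Finset.inf_le hy).trans (measure_mono fun z hz ↦ ?_)
    rw [mem_ball] at hz hxy
    rw [mem_closedBall]
    linarith [dist_triangle_right z x y]
  -- `δ₀` itself may be `∞` (when `t = ∅`), so halve `min δ₀ 1` instead.
  have hmin : min δ₀ 1 ≠ ∞ := (min_le_right _ _).trans_lt one_lt_top |>.ne
  refine ⟨min δ₀ 1 / 2, ENNReal.half_pos (lt_min hδ₀ one_pos).ne', fun x ↦ ?_⟩
  calc min δ₀ 1 / 2 < min δ₀ 1 := ENNReal.half_lt_self (lt_min hδ₀ one_pos).ne' hmin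
    _ ≤ δ₀ := min_le_left _ _
    _ ≤ μ (closedBall x ε) := hle x

lemma totallyBounded_univ_of_forall_measure_setOf_measure_closedBall_le_eq_zero
    [OpensMeasurableSpace X] [IsFiniteMeasure μ] [μ.IsOpenPosMeasure]
    (h : ∀ ε > (0 : ℝ), ∃ δ : ℝ≥0∞, 0 < δ ∧ μ {x : X | μ (closedBall x ε) ≤ δ} = 0) :
    TotallyBounded (Set.univ : Set X) := by
  by_contra hX
  obtain ⟨ε, hε, f, -, hf⟩ := exists_seq_pairwise_le_dist_of_not_totallyBounded hX
  obtain ⟨δ, hδ, hthin⟩ := h (ε / 4) (by positivity)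
  have hdisj : Pairwise (Disjoint on fun n ↦ ball (f n) (2 * (ε / 4))) := fun m n hmn ↦
    ball_disjoint_ball (by linarith [hf hmn])
  obtain ⟨n, hn⟩ := exists_measure_le_of_pairwise_disjoint μ (fun _ ↦ measurableSet_ball) hdisj hδ
  have hzero : μ (ball (f n) (ε / 4)) = 0 :=
    measure_mono_null (ball_subset_setOf_measure_closedBall_le hn) hthin
  exact (measure_ball_pos μ (f n) (by positivity)).ne' hzero

end

theorem compact_iff_no_thin_points_general {X : Type*} [MetricSpace X] [CompleteSpace X]
    [MeasurableSpace X] [BorelSpace X]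
    (μ : Measure X) [IsProbabilityMeasure μ]
    (hsupp : ∀ x : X, ∀ r > (0 : ℝ), 0 < μ (ball x r)) :
    CompactSpace X ↔
      ∀ ε > (0 : ℝ), ∃ δ : ℝ≥0∞, 0 < δ ∧ μ {x : X | μ (closedBall x ε) ≤ δ} = 0 := by
  have := isOpenPosMeasure_of_forall_measure_ball_pos hsupp
  constructor
  · intro _ ε hε
    obtain ⟨δ, hδ, hlt⟩ := exists_pos_forall_lt_measure_closedBall μ hε
    have hempty : {x : X | μ (closedBall x ε) ≤ δ} = ∅ :=
      Set.eq_empty_of_forall_notMem fun x hx ↦ (hlt x).not_ge hx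
    exact ⟨δ, hδ, by rw [hempty, measure_empty]⟩
  · intro h
    have htb := totallyBounded_univ_of_forall_measure_setOf_measure_closedBall_le_eq_zero μ h
    exact isCompact_univ_iff.1 <| isCompact_iff_totallyBounded_isComplete.2
      ⟨htb, completeSpace_iff_isComplete_univ.1 ‹_›⟩

/-- A complete separable metric space with a Borel probability measure of full support
is compact iff for every `ε > 0` there is `δ > 0` with `μ{x : μ(B_ε(x)) ≤ δ} = 0`. -/
theorem compact_iff_no_thin_points {X : Type*} [MetricSpace X] [CompleteSpace X]
    [TopologicalSpace.SeparableSpace X] [MeasurableSpace X] [BorelSpace X]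
    (μ : Measure X) [IsProbabilityMeasure μ]
    (hsupp : ∀ x : X, ∀ r > (0 : ℝ), 0 < μ (ball x r)) :
    CompactSpace X ↔
      ∀ ε > (0 : ℝ), ∃ δ : ℝ≥0∞, 0 < δ ∧ μ {x : X | μ (closedBall x ε) ≤ δ} = 0 :=
  compact_iff_no_thin_points_general μ hsupp
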